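/- Let G_±(k,ω) = (1/2π²) ∫_{−y₀}^{y₀} e^{iωt} ∫₀^{π/2} e^{±k√(y₀²−t²) sin s} ds dt. Then G_+(k,ω) + G_−(k,ω) = sin(y₀√(ω²−k²))/(π√(ω²−k²)) for all real k, ω (with the analytic continuation sinh(y₀√(k²−ω²))/(π√(k²−ω²)) when |ω| < |k|). -/

import Mathlib

/-! Since `exp z + exp (-z) = 2 cosh z`, the inner integrals of `G₊` and `G₋` add up to
`∫₀^{π/2} 2 cosh (x sin s) ds = π ∑ (x²/4)ⁿ / n!² = π J₀(ix)` (termwise, by Wallis' integrals), with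
`x = k √(y₀² - t²)`. This kernel is even in `t`, so `e^{iωt}` may be replaced by `cos ωt`. Expanding
`cos ωt` as well, the double series is integrated term by term (dominated convergence), and the
Beta-type integrals `∫ t^{2p} (y₀² - t²)ⁿ dt` turn the `(p, n)` term into
`C(N, p) (-ω²)^p (k²)ⁿ y₀^{2N+1} / (2N+1)!` with `N = p + n`, up to the factor `2π`. Summing along
antidiagonals with the binomial theorem leaves `∑ y₀^{2N+1} (k² - ω²)^N / (2N+1)!`, which is the
series of `sin (y₀ r) / r` for `r² = ω² - k²`, of `sinh (y₀ r) / r` for `r² = k² - ω²`, and `y₀`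
when `k² = ω²`. -/

noncomputable def Gpm (y₀ : ℝ) (sgn : ℝ) (k ω : ℝ) : ℂ :=
  (1 / (2 * Real.pi ^ 2)) *
    ∫ t in (-y₀)..y₀, Complex.exp (Complex.I * ω * t) *
      ∫ s in (0 : ℝ)..(Real.pi / 2),
        Complex.exp ((sgn * k * Real.sqrt (y₀ ^ 2 - t ^ 2) * Real.sin s : ℝ))

open Real MeasureTheory intervalIntegral Finset
open scoped Nat Interval

theorem prod_range_odd_div_even (n : ℕ) :
    ∏ i ∈ range n, (2 * (i : ℝ) + 1) / (2 * i + 2) = (2 * n)! / (4 ^ n * (n ! : ℝ) ^ 2) := by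
  induction n with
  | zero => simp
  | succ m ih =>
    rw [prod_range_succ, ih, show 2 * (m + 1) = 2 * m + 1 + 1 by ring, Nat.factorial_succ,
      Nat.factorial_succ, Nat.factorial_succ]
    push_cast
    field_simp
    ring

theorem integral_sin_pow_even_zero_pi_div_two (n : ℕ) :
    ∫ x in 0..π / 2, sin x ^ (2 * n) = π * (2 * n)! / (2 * 4 ^ n * (n ! : ℝ) ^ 2) := by
  have hint (a b : ℝ) : IntervalIntegrable (fun x => sin x ^ (2 * n)) volume a b :=
    (continuous_sin.pow _).intervalIntegrable a b
  have hsymm : ∫ x in π / 2..π, sin x ^ (2 * n) = ∫ x in 0..π / 2, sin x ^ (2 * n) := by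
    simpa [sin_pi_sub, show π - π / 2 = π / 2 by ring] using
      (integral_comp_sub_left (fun x => sin x ^ (2 * n)) π (a := 0) (b := π / 2)).symm
  have h := integral_sin_pow_even (n := n)
  rw [← integral_add_adjacent_intervals (hint 0 (π / 2)) (hint _ _), hsymm,
    prod_range_odd_div_even] at h
  field_simp at h ⊢
  linarith

theorem hasDerivAt_pow_mul_sq_sub_sq_pow (y t : ℝ) (p n : ℕ) :
    HasDerivAt (fun t => t ^ (2 * p + 1) * (y ^ 2 - t ^ 2) ^ (n + 1))
      ((2 * p + 2 * n + 3) * (t ^ (2 * p) * (y ^ 2 - t ^ 2) ^ (n + 1))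
        - 2 * (n + 1) * y ^ 2 * (t ^ (2 * p) * (y ^ 2 - t ^ 2) ^ n)) t := by
  have h := (hasDerivAt_pow (2 * p + 1) t).fun_mul
    (((hasDerivAt_pow 2 t).const_sub (y ^ 2)).fun_pow (n + 1))
  refine h.congr_deriv ?_
  simp only [Nat.add_one_sub_one]
  push_cast
  ring

theorem integral_pow_mul_sq_sub_sq_pow_succ (y : ℝ) (p n : ℕ) :
    (2 * p + 2 * n + 3) * ∫ t in -y..y, t ^ (2 * p) * (y ^ 2 - t ^ 2) ^ (n + 1)
      = 2 * (n + 1) * y ^ 2 * ∫ t in -y..y, t ^ (2 * p) * (y ^ 2 - t ^ 2) ^ n := by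
  have hint (m : ℕ) :
      IntervalIntegrable (fun t => t ^ (2 * p) * (y ^ 2 - t ^ 2) ^ m) volume (-y) y :=
    (by fun_prop : Continuous _).intervalIntegrable _ _
  have hftc := integral_eq_sub_of_hasDerivAt (fun t _ => hasDerivAt_pow_mul_sq_sub_sq_pow y t p n)
    (((hint _).const_mul _).sub ((hint _).const_mul _))
  rw [integral_sub ((hint _).const_mul _) ((hint _).const_mul _),
    intervalIntegral.integral_const_mul, intervalIntegral.integral_const_mul] at hftc
  simp only [even_two, Even.neg_pow, sub_self, zero_pow (Nat.succ_ne_zero _), mul_zero] at hftc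
  linarith

theorem integral_pow_mul_sq_sub_sq_pow (y : ℝ) (p n : ℕ) :
    ∫ t in -y..y, t ^ (2 * p) * (y ^ 2 - t ^ 2) ^ n
      = 2 * y ^ (2 * (p + n) + 1) * 4 ^ n * n ! * (p + n)! * (2 * p)!
          / ((2 * (p + n) + 1)! * (p ! : ℝ)) := by
  induction n with
  | zero =>
    simp only [pow_zero, mul_one, add_zero, integral_pow, Nat.factorial_zero, Nat.cast_one,
      Odd.neg_pow (⟨p, rfl⟩ : Odd (2 * p + 1)), Nat.factorial_succ (2 * p)]
    push_cast
    field_simp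
    ring
  | succ n ih =>
    have h := integral_pow_mul_sq_sub_sq_pow_succ y p n
    rw [ih, mul_comm, ← eq_div_iff (by positivity)] at h
    have hfac₁ : ((2 * (p + (n + 1)) + 1)! : ℝ)
        = (2 * (p + n) + 3) * (2 * (p + n) + 2) * (2 * (p + n) + 1)! := by
      rw [show 2 * (p + (n + 1)) + 1 = 2 * (p + n) + 1 + 1 + 1 by ring, Nat.factorial_succ,
        Nat.factorial_succ]
      push_cast
      ring
    have hfac₂ : ((p + (n + 1))! : ℝ) = (p + n + 1) * (p + n)! := by
      rw [← add_assoc, Nat.factorial_succ]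
      push_cast
      ring
    rw [h, hfac₁, hfac₂, Nat.factorial_succ n]
    push_cast
    field_simp
    ring

theorem hasSum_intervalIntegral_of_summable_bound {ι E : Type*} [Countable ι]
    [NormedAddCommGroup E] [NormedSpace ℝ E] {a b : ℝ} {F : ι → ℝ → E} {f : ℝ → E} {M : ι → ℝ}
    (hF : ∀ i, Continuous (F i)) (hM : Summable M) (hFM : ∀ i, ∀ t ∈ Ι a b, ‖F i t‖ ≤ M i)
    (hFf : ∀ t ∈ Ι a b, HasSum (fun i => F i t) (f t)) :
    HasSum (fun i => ∫ t in a..b, F i t) (∫ t in a..b, f t) :=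
  hasSum_integral_of_dominated_convergence (fun i _ => M i)
    (fun i => (hF i).aestronglyMeasurable) (fun i => ae_of_all _ (hFM i))
    (ae_of_all _ fun _ _ => hM) intervalIntegrable_const (ae_of_all _ hFf)

theorem hasSum_integral_two_cosh_mul_sin (x : ℝ) :
    HasSum (fun n : ℕ => π * (x ^ 2 / 4) ^ n / (n ! : ℝ) ^ 2)
      (∫ s in 0..π / 2, 2 * cosh (x * sin s)) := by
  have hterm (n : ℕ) : ∫ s in 0..π / 2, 2 * ((x * sin s) ^ (2 * n) / (2 * n)!)
      = π * (x ^ 2 / 4) ^ n / (n ! : ℝ) ^ 2 := by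
    simp_rw [mul_pow x, mul_div_right_comm _ (sin _ ^ _), ← mul_assoc]
    rw [intervalIntegral.integral_const_mul, integral_sin_pow_even_zero_pi_div_two, pow_mul,
      div_pow]
    field_simp
  have hbound (n : ℕ) (s : ℝ) :
      ‖2 * ((x * sin s) ^ (2 * n) / (2 * n)!)‖ ≤ 2 * (x ^ (2 * n) / (2 * n)!) := by
    have hsin : sin s ^ (2 * n) ≤ 1 := by
      rw [pow_mul]
      exact pow_le_one₀ (sq_nonneg _) (sin_sq_le_one s)
    have hx := (even_two_mul n).pow_nonneg x
    rw [Real.norm_of_nonneg (by positivity [(even_two_mul n).pow_nonneg (x * sin s)]), mul_pow]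
    gcongr
    exact mul_le_of_le_one_right hx hsin
  simpa only [hterm] using hasSum_intervalIntegral_of_summable_bound (a := 0) (b := π / 2)
    (fun n => by fun_prop)
    ((hasSum_cosh x).mul_left 2).summable (fun n s _ => hbound n s)
    (fun s _ => (hasSum_cosh _).mul_left 2)

theorem integral_exp_mul_I_mul_ofReal_of_even {g : ℝ → ℝ} (hg : Continuous g)
    (heven : ∀ t, g (-t) = g t) (a ω : ℝ) :
    ∫ t in -a..a, Complex.exp (Complex.I * ω * t) * g t
      = ((∫ t in -a..a, cos (ω * t) * g t : ℝ) : ℂ) := by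
  set f : ℝ → ℂ := fun t => Complex.exp (Complex.I * ω * t) * g t with hf_def
  have hf : Continuous f := by fun_prop
  have hflip : ∫ t in -a..a, f (-t) = ∫ t in -a..a, f t := by
    rw [integral_comp_neg, neg_neg]
  have hsymm (t : ℝ) : f t + f (-t) = 2 * ((cos (ω * t) * g t : ℝ) : ℂ) := by
    simp only [hf_def, heven]
    push_cast
    rw [← mul_assoc, Complex.two_cos]
    ring_nf
  have h := intervalIntegral.integral_add (hf.intervalIntegrable (μ := volume) (-a) a)
    ((hf.comp continuous_neg).intervalIntegrable (-a) a)
  simp only [Function.comp_def, hsymm, hflip, intervalIntegral.integral_const_mul,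
    intervalIntegral.integral_ofReal] at h
  change ∫ t in -a..a, f t = _
  linear_combination -h / 2

theorem Gpm_one_add_Gpm_neg_one (y k ω : ℝ) :
    Gpm y 1 k ω + Gpm y (-1) k ω = (((1 / (2 * π ^ 2)) * ∫ t in -y..y,
      cos (ω * t) * ∫ s in 0..π / 2, 2 * cosh (k * √(y ^ 2 - t ^ 2) * sin s) : ℝ) : ℂ) := by
  have hinner (c : ℝ) : (∫ s in 0..π / 2, Complex.exp ((c * sin s : ℝ) : ℂ))
      + ∫ s in 0..π / 2, Complex.exp ((-(c * sin s) : ℝ) : ℂ)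
      = ((∫ s in 0..π / 2, 2 * cosh (c * sin s) : ℝ) : ℂ) := by
    have h₁ : Continuous fun s => Complex.exp ((c * sin s : ℝ) : ℂ) := by fun_prop
    have h₂ : Continuous fun s => Complex.exp ((-(c * sin s) : ℝ) : ℂ) := by fun_prop
    rw [← intervalIntegral.integral_add (h₁.intervalIntegrable _ _) (h₂.intervalIntegrable _ _),
      ← intervalIntegral.integral_ofReal]
    congr 1 with s
    push_cast
    rw [Complex.two_cosh]
  have heven (t : ℝ) : ∫ s in 0..π / 2, 2 * cosh (k * √(y ^ 2 - (-t) ^ 2) * sin s)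
      = ∫ s in 0..π / 2, 2 * cosh (k * √(y ^ 2 - t ^ 2) * sin s) := by
    rw [neg_sq]
  rw [Gpm, Gpm, ← mul_add, ← intervalIntegral.integral_add]
  · simp_rw [one_mul, neg_one_mul, neg_mul, ← mul_add, hinner]
    rw [integral_exp_mul_I_mul_ofReal_of_even (by fun_prop) heven]
    push_cast
    ring
  all_goals exact (by fun_prop : Continuous _).intervalIntegrable _ _

theorem HasSum.sum_antidiagonal {α A : Type*} [AddCommMonoid α] [TopologicalSpace α]
    [ContinuousAdd α] [RegularSpace α] [AddMonoid A] [HasAntidiagonal A] {f : A × A → α} {a : α}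
    (h : HasSum f a) : HasSum (fun n => ∑ ij ∈ antidiagonal n, f ij) a :=
  (HasAntidiagonal.sigmaAntidiagonalEquivProd.hasSum_iff.mpr h).sigma fun n => by
    rw [← Finset.sum_coe_sort]
    exact hasSum_fintype _

theorem norm_neg_one_pow_mul_pow_two_mul_div_factorial (x : ℝ) (p : ℕ) :
    ‖(-1) ^ p * x ^ (2 * p) / (2 * p)!‖ = x ^ (2 * p) / (2 * p)! := by
  rw [norm_div, norm_mul, norm_pow, norm_neg, norm_one, one_pow, one_mul, norm_pow,
    Real.norm_eq_abs, (even_two_mul p).pow_abs, Real.norm_natCast]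

theorem hasSum_cos_mul_integral_two_cosh (y k ω t : ℝ) (ht : t ^ 2 ≤ y ^ 2) :
    HasSum (fun q : ℕ × ℕ => (-1) ^ q.1 * (ω * t) ^ (2 * q.1) / (2 * q.1)!
        * (π * (k ^ 2 * (y ^ 2 - t ^ 2) / 4) ^ q.2 / (q.2 ! : ℝ) ^ 2))
      (cos (ω * t) * ∫ s in 0..π / 2, 2 * cosh (k * √(y ^ 2 - t ^ 2) * sin s)) := by
  have hr : (k * √(y ^ 2 - t ^ 2)) ^ 2 = k ^ 2 * (y ^ 2 - t ^ 2) := by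
    rw [mul_pow, sq_sqrt (by linarith)]
  have hI := hasSum_integral_two_cosh_mul_sin (k * √(y ^ 2 - t ^ 2))
  rw [hr] at hI
  have hCnorm : Summable fun p : ℕ => ‖(-1) ^ p * (ω * t) ^ (2 * p) / (2 * p)!‖ := by
    simpa only [norm_neg_one_pow_mul_pow_two_mul_div_factorial] using (hasSum_cosh (ω * t)).summable
  have hInorm : Summable fun n : ℕ => ‖π * (k ^ 2 * (y ^ 2 - t ^ 2) / 4) ^ n / (n ! : ℝ) ^ 2‖ := by
    have : 0 ≤ k ^ 2 * (y ^ 2 - t ^ 2) / 4 :=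
      div_nonneg (mul_nonneg (sq_nonneg k) (by linarith)) zero_le_four
    exact hI.summable.congr fun n => (Real.norm_of_nonneg (by positivity)).symm
  convert (hasSum_cos (ω * t)).mul hI (summable_mul_of_summable_norm hCnorm hInorm) using 1

theorem hasSum_prod_integral_cos_mul_integral_two_cosh (y k ω : ℝ) :
    HasSum (fun q : ℕ × ℕ => ∫ t in -y..y, (-1) ^ q.1 * (ω * t) ^ (2 * q.1) / (2 * q.1)!
        * (π * (k ^ 2 * (y ^ 2 - t ^ 2) / 4) ^ q.2 / (q.2 ! : ℝ) ^ 2))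
      (∫ t in -y..y, cos (ω * t) * ∫ s in 0..π / 2, 2 * cosh (k * √(y ^ 2 - t ^ 2) * sin s)) := by
  have hsq (t : ℝ) (ht : t ∈ Ι (-y) y) : t ^ 2 ≤ y ^ 2 := by
    rcases Set.mem_uIcc.1 (Set.uIoc_subset_uIcc ht) with h | h <;> nlinarith
  have hM : Summable fun q : ℕ × ℕ => (ω * y) ^ (2 * q.1) / (2 * q.1)!
      * (π * ((k * y) ^ 2 / 4) ^ q.2 / (q.2 ! : ℝ) ^ 2) :=
    (hasSum_cosh (ω * y)).summable.mul_of_nonneg (hasSum_integral_two_cosh_mul_sin (k * y)).summable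
      (fun p => by positivity [(even_two_mul p).pow_nonneg (ω * y)]) (fun n => by positivity)
  refine hasSum_intervalIntegral_of_summable_bound (fun q => by fun_prop) hM (fun q t ht => ?_)
    (fun t ht => hasSum_cos_mul_integral_two_cosh y k ω t (hsq t ht))
  have ht := hsq t ht
  have hcos : (ω * t) ^ (2 * q.1) / (2 * q.1)! ≤ (ω * y) ^ (2 * q.1) / (2 * q.1)! := by
    rw [← (even_two_mul q.1).pow_abs, ← (even_two_mul q.1).pow_abs (ω * y), abs_mul, abs_mul]
    gcongr ?_ ^ _ / _
    exact mul_le_mul_of_nonneg_left (sq_le_sq.1 ht) (abs_nonneg ω)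
  have hnonneg : 0 ≤ k ^ 2 * (y ^ 2 - t ^ 2) / 4 :=
    div_nonneg (mul_nonneg (sq_nonneg k) (by linarith)) zero_le_four
  have hbessel : π * (k ^ 2 * (y ^ 2 - t ^ 2) / 4) ^ q.2 / (q.2 ! : ℝ) ^ 2
      ≤ π * ((k * y) ^ 2 / 4) ^ q.2 / (q.2 ! : ℝ) ^ 2 := by
    gcongr
    nlinarith [sq_nonneg k]
  rw [norm_mul, norm_neg_one_pow_mul_pow_two_mul_div_factorial,
    Real.norm_of_nonneg (by positivity)]
  exact mul_le_mul hcos hbessel (by positivity)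
    (by positivity [(even_two_mul q.1).pow_nonneg (ω * y)])

theorem integral_cos_mul_two_cosh_series_term (y k ω : ℝ) (p n : ℕ) :
    ∫ t in -y..y, (-1) ^ p * (ω * t) ^ (2 * p) / (2 * p)!
        * (π * (k ^ 2 * (y ^ 2 - t ^ 2) / 4) ^ n / (n ! : ℝ) ^ 2)
      = 2 * π * (y ^ (2 * (p + n) + 1) * (p + n).choose p * (-ω ^ 2) ^ p * (k ^ 2) ^ n
          / (2 * (p + n) + 1)!) := by
  have hchoose : ((p + n).choose p : ℝ) * p ! * n ! = (p + n)! := by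
    rw [add_comm p n, mul_right_comm]
    exact_mod_cast Nat.add_choose_mul_factorial_mul_factorial n p
  calc ∫ t in -y..y, (-1) ^ p * (ω * t) ^ (2 * p) / (2 * p)!
          * (π * (k ^ 2 * (y ^ 2 - t ^ 2) / 4) ^ n / (n ! : ℝ) ^ 2)
      _ = ∫ t in -y..y, (-1) ^ p * ω ^ (2 * p) / (2 * p)!
            * (π * (k ^ 2) ^ n / (4 ^ n * (n ! : ℝ) ^ 2))
            * (t ^ (2 * p) * (y ^ 2 - t ^ 2) ^ n) := by
        congr 1 with t
        simp only [mul_pow, div_pow]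
        ring
      _ = _ := by
        rw [intervalIntegral.integral_const_mul, integral_pow_mul_sq_sub_sq_pow, ← hchoose,
          neg_pow, ← pow_mul, mul_comm 2 p]
        field_simp
        ring

theorem hasSum_integral_cos_mul_integral_two_cosh (y k ω : ℝ) :
    HasSum (fun N : ℕ => 2 * π * (y ^ (2 * N + 1) * (k ^ 2 - ω ^ 2) ^ N / (2 * N + 1)!))
      (∫ t in -y..y, cos (ω * t) * ∫ s in 0..π / 2, 2 * cosh (k * √(y ^ 2 - t ^ 2) * sin s)) := by
  have h := (hasSum_prod_integral_cos_mul_integral_two_cosh y k ω).sum_antidiagonal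
  simp only [integral_cos_mul_two_cosh_series_term] at h
  convert h using 2 with N
  rw [← mul_sum, sub_eq_neg_add, (Commute.all _ _).add_pow']
  congr 1
  rw [mul_sum, sum_div]
  refine sum_congr rfl fun pn hpn => ?_
  rw [mem_antidiagonal.1 hpn, nsmul_eq_mul]
  ring

theorem hasSum_pow_mul_neg_sq_pow_div_factorial (y r : ℝ) (hr : r ≠ 0) :
    HasSum (fun N : ℕ => y ^ (2 * N + 1) * (-r ^ 2) ^ N / (2 * N + 1)!) (sin (y * r) / r) := by
  have hterm (N : ℕ) : y ^ (2 * N + 1) * (-r ^ 2) ^ N / (2 * N + 1)!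
      = (-1) ^ N * (y * r) ^ (2 * N + 1) / (2 * N + 1)! / r := by
    rw [neg_pow, ← pow_mul, mul_pow]
    field_simp
    ring
  simpa only [hterm] using (hasSum_sin (y * r)).div_const r

theorem hasSum_pow_mul_sq_pow_div_factorial (y r : ℝ) (hr : r ≠ 0) :
    HasSum (fun N : ℕ => y ^ (2 * N + 1) * (r ^ 2) ^ N / (2 * N + 1)!) (sinh (y * r) / r) := by
  have hterm (N : ℕ) : y ^ (2 * N + 1) * (r ^ 2) ^ N / (2 * N + 1)!
      = (y * r) ^ (2 * N + 1) / (2 * N + 1)! / r := by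
    rw [← pow_mul, mul_pow]
    field_simp
    ring
  simpa only [hterm] using (hasSum_sinh (y * r)).div_const r

theorem G_sum_general (y₀ k ω : ℝ) :
    Gpm y₀ 1 k ω + Gpm y₀ (-1) k ω
      = if k ^ 2 < ω ^ 2 then
          ((Real.sin (y₀ * Real.sqrt (ω ^ 2 - k ^ 2))
            / (Real.pi * Real.sqrt (ω ^ 2 - k ^ 2)) : ℝ) : ℂ)
        else if ω ^ 2 < k ^ 2 then
          ((Real.sinh (y₀ * Real.sqrt (k ^ 2 - ω ^ 2))
            / (Real.pi * Real.sqrt (k ^ 2 - ω ^ 2)) : ℝ) : ℂ)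
        else ((y₀ / Real.pi : ℝ) : ℂ) := by
  set V := ∫ t in -y₀..y₀, cos (ω * t) * ∫ s in 0..π / 2, 2 * cosh (k * √(y₀ ^ 2 - t ^ 2) * sin s)
  have hS : HasSum (fun N : ℕ => y₀ ^ (2 * N + 1) * (k ^ 2 - ω ^ 2) ^ N / (2 * N + 1)!)
      (V / (2 * π)) := by
    simpa only [mul_div_cancel_left₀ _ two_pi_pos.ne'] using
      (hasSum_integral_cos_mul_integral_two_cosh y₀ k ω).div_const (2 * π)
  have hV : 1 / (2 * π ^ 2) * V = V / (2 * π) / π := by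
    field_simp
  rw [Gpm_one_add_Gpm_neg_one, hV]
  split_ifs with h₁ h₂ <;> congr 1
  · have hr : √(ω ^ 2 - k ^ 2) ≠ 0 := (sqrt_pos.2 (by linarith)).ne'
    rw [show k ^ 2 - ω ^ 2 = -√(ω ^ 2 - k ^ 2) ^ 2 by rw [sq_sqrt (by linarith)]; ring] at hS
    rw [hS.unique (hasSum_pow_mul_neg_sq_pow_div_factorial y₀ _ hr), div_div, mul_comm π]
  · have hr : √(k ^ 2 - ω ^ 2) ≠ 0 := (sqrt_pos.2 (by linarith)).ne'
    rw [show k ^ 2 - ω ^ 2 = √(k ^ 2 - ω ^ 2) ^ 2 from (sq_sqrt (by linarith)).symm] at hS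
    rw [hS.unique (hasSum_pow_mul_sq_pow_div_factorial y₀ _ hr), div_div, mul_comm π]
  · rw [show k ^ 2 - ω ^ 2 = 0 by linarith] at hS
    rw [hS.unique (hasSum_single 0 fun N hN => by simp [hN])]
    simp

theorem G_sum (y₀ k ω : ℝ) (hy₀ : 0 < y₀) :
    Gpm y₀ 1 k ω + Gpm y₀ (-1) k ω
      = if k ^ 2 < ω ^ 2 then
          ((Real.sin (y₀ * Real.sqrt (ω ^ 2 - k ^ 2))
            / (Real.pi * Real.sqrt (ω ^ 2 - k ^ 2)) : ℝ) : ℂ)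
        else if ω ^ 2 < k ^ 2 then
          ((Real.sinh (y₀ * Real.sqrt (k ^ 2 - ω ^ 2))
            / (Real.pi * Real.sqrt (k ^ 2 - ω ^ 2)) : ℝ) : ℂ)
        else ((y₀ / Real.pi : ℝ) : ℂ) :=
  G_sum_general y₀ k ω
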